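/- arXiv:1110.0165 — 3 statements merged into one kernel-verified Lean document; each statement's English description precedes it below -/
import Mathlib

section
/- Let k be an even natural number with k ≥ 2 and let ζ = (1 + i/k)². Then Re(ζᵏ) < 0 and 0 < Im(ζᵏ). -/
/-!
Writing `1 + i/k = √(1 + k⁻²) · e^{iθ}` with `θ = arctan (1/k)`, we get `ζᵏ = (1 + k⁻²)ᵏ e^{2ikθ}`,
so it suffices that the argument `2kθ` lies in `(π/2, π)`. The bounds
`1/(k√(1 + k⁻²)) = sin θ < θ < tan θ = 1/k` give `4/√5 ≤ 2/√(1 + k⁻²) < 2kθ < 2` for `k ≥ 2`.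
-/

open Complex Real

theorem Real.arctan_lt_self {x : ℝ} (hx : 0 < x) : arctan x < x := by
  have h := lt_tan (arctan_pos.2 hx) (arctan_lt_pi_div_two x)
  rwa [tan_arctan] at h

theorem Real.div_sqrt_one_add_sq_lt_arctan {x : ℝ} (hx : 0 < x) :
    x / √(1 + x ^ 2) < arctan x :=
  sin_arctan x ▸ sin_lt (arctan_pos.2 hx)

theorem Complex.one_add_mul_I_eq_polar (x : ℝ) :
    (1 + x * I : ℂ) = (√(1 + x ^ 2) : ℝ) * exp (Real.arctan x * I) := by
  have hr : (√(1 + x ^ 2) : ℂ) ≠ 0 := by exact_mod_cast (sqrt_pos.2 (by positivity)).ne'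
  rw [exp_mul_I, ← ofReal_cos, ← ofReal_sin, sin_arctan, cos_arctan]
  push_cast
  field_simp

theorem Complex.one_add_mul_I_pow (x : ℝ) (n : ℕ) :
    (1 + x * I : ℂ) ^ n = (√(1 + x ^ 2) ^ n : ℝ) * exp ((n * Real.arctan x : ℝ) * I) := by
  rw [one_add_mul_I_eq_polar, mul_pow, ← exp_nat_mul]
  push_cast
  ring_nf

theorem Real.two_mul_mul_arctan_inv_mem_Ioo {t : ℝ} (ht : 2 ≤ t) :
    2 * t * arctan t⁻¹ ∈ Set.Ioo (π / 2) π := by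
  have ht0 : 0 < t := by linarith
  have ht_inv : 0 < t⁻¹ := inv_pos.2 ht0
  set r := √(1 + t⁻¹ ^ 2)
  have hr : 0 < r := sqrt_pos.2 (by positivity)
  have hr2 : r ^ 2 ≤ 5 / 4 := by
    have : t⁻¹ ≤ 1 / 2 := by rw [inv_eq_one_div]; gcongr
    rw [sq_sqrt (by positivity)]; nlinarith
  constructor
  · have hlow : 2 / r < 2 * t * arctan t⁻¹ := by
      calc 2 / r = 2 * t * (t⁻¹ / r) := by field_simp
        _ < 2 * t * arctan t⁻¹ := by gcongr; exact div_sqrt_one_add_sq_lt_arctan ht_inv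
    have : π / 2 < 2 / r := by
      rw [div_lt_div_iff₀ two_pos hr]
      nlinarith [pi_lt_d2, pi_gt_three]
    linarith
  · calc 2 * t * arctan t⁻¹ < 2 * t * t⁻¹ := by gcongr; exact arctan_lt_self ht_inv
      _ = 2 := by field_simp
      _ < π := by linarith [pi_gt_three]

theorem estermann_lemma_general (k : ℕ) (hk2 : 2 ≤ k) :
    ((((1 : ℂ) + Complex.I / (k : ℂ)) ^ 2) ^ k).re < 0 ∧
      0 < ((((1 : ℂ) + Complex.I / (k : ℂ)) ^ 2) ^ k).im := by
  have hk : (2 : ℝ) ≤ k := by exact_mod_cast hk2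
  have hζ : (((1 : ℂ) + I / k) ^ 2) ^ k = (1 + ((k : ℝ)⁻¹ : ℝ) * I) ^ (2 * k) := by
    rw [← pow_mul, div_eq_inv_mul]; push_cast; rfl
  have hφ : ((2 * k : ℕ) : ℝ) * Real.arctan (k : ℝ)⁻¹ = 2 * k * Real.arctan (k : ℝ)⁻¹ := by
    push_cast; rfl
  obtain ⟨hφ_low, hφ_high⟩ := two_mul_mul_arctan_inv_mem_Ioo hk
  have hr : 0 < √(1 + (k : ℝ)⁻¹ ^ 2) ^ (2 * k) := by positivity
  rw [hζ, one_add_mul_I_pow, re_ofReal_mul, im_ofReal_mul, exp_ofReal_mul_I_re,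
    exp_ofReal_mul_I_im, hφ]
  exact ⟨mul_neg_of_pos_of_neg hr (cos_neg_of_pi_div_two_lt_of_lt hφ_low (by linarith)),
    mul_pos hr (sin_pos_of_pos_of_lt_pi (by linarith [pi_pos]) hφ_high)⟩

/-- Estermann's Lemma: for `k` even, `k ≥ 2`, and `ζ = (1 + i/k)²`,
we have `Re(ζᵏ) < 0 < Im(ζᵏ)`. -/
theorem estermann_lemma (k : ℕ) (hk : Even k) (hk2 : 2 ≤ k) :
    ((((1 : ℂ) + Complex.I / (k : ℂ)) ^ 2) ^ k).re < 0 ∧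
      0 < ((((1 : ℂ) + Complex.I / (k : ℂ)) ^ 2) ^ k).im :=
  estermann_lemma_general k hk2
end

section
/- For every integer k ≥ 2 and every integer j with 1 ≤ j ≤ k−1, one has C(2k,2j−1)/k^{2j−1} − C(2k,2j+1)/k^{2j+1} > 0. -/
/-- For every integer `k ≥ 2` and every `1 ≤ j ≤ k − 1`,
`C(2k,2j−1)/k^{2j−1} − C(2k,2j+1)/k^{2j+1} > 0`. -/
theorem odd_pair_pos (k j : ℕ) (hk : 2 ≤ k) (hj1 : 1 ≤ j) (hj2 : j ≤ k - 1) :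
    (Nat.choose (2 * k) (2 * j - 1) : ℝ) / (k : ℝ) ^ (2 * j - 1)
      - (Nat.choose (2 * k) (2 * j + 1) : ℝ) / (k : ℝ) ^ (2 * j + 1) > 0 := by
  have hjk : j + 1 ≤ k := by omega
  set a := Nat.choose (2 * k) (2 * j - 1) with ha
  set b := Nat.choose (2 * k) (2 * j + 1) with hb
  -- choose recurrences
  have h1 : Nat.choose (2 * k) (2 * j) * (2 * j) = a * (2 * k - (2 * j - 1)) := by
    have := Nat.choose_succ_right_eq (2 * k) (2 * j - 1)
    have e : 2 * j - 1 + 1 = 2 * j := by omega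
    rw [e] at this
    exact this
  have h2 : b * (2 * j + 1) = Nat.choose (2 * k) (2 * j) * (2 * k - 2 * j) :=
    Nat.choose_succ_right_eq (2 * k) (2 * j)
  have hcomb : b * ((2 * j + 1) * (2 * j)) = a * ((2 * k - (2 * j - 1)) * (2 * k - 2 * j)) := by
    calc b * ((2 * j + 1) * (2 * j)) = (b * (2 * j + 1)) * (2 * j) := by ring
    _ = (Nat.choose (2 * k) (2 * j) * (2 * j)) * (2 * k - 2 * j) := by rw [h2]; ring
    _ = (a * (2 * k - (2 * j - 1))) * (2 * k - 2 * j) := by rw [h1]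
    _ = a * ((2 * k - (2 * j - 1)) * (2 * k - 2 * j)) := by ring
  have hapos : 0 < a := Nat.choose_pos (by omega)
  -- key: (2k - (2j-1)) * (2k - 2j) < k^2 * ((2j+1)*(2j))
  have hkey : (2 * k - (2 * j - 1)) * (2 * k - 2 * j) < k ^ 2 * ((2 * j + 1) * (2 * j)) := by
    have h6 : 6 ≤ (2 * j + 1) * (2 * j) := by nlinarith
    have hA : 2 * k - (2 * j - 1) ≤ 2 * k - 1 := by omega
    have hB : 2 * k - 2 * j ≤ 2 * k - 2 := by omega
    calc (2 * k - (2 * j - 1)) * (2 * k - 2 * j) ≤ (2 * k - 1) * (2 * k - 2) :=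
          Nat.mul_le_mul hA hB
    _ < k ^ 2 * 6 := by
        obtain ⟨m, rfl⟩ := Nat.exists_eq_add_of_le hk
        have e1 : 2 * (2 + m) - 1 = 2 * m + 3 := by omega
        have e2 : 2 * (2 + m) - 2 = 2 * m + 2 := by omega
        rw [e1, e2]; nlinarith
    _ ≤ k ^ 2 * ((2 * j + 1) * (2 * j)) := Nat.mul_le_mul_left _ h6
  have hlt : b < a * k ^ 2 := by
    have : b * ((2 * j + 1) * (2 * j)) < (a * k ^ 2) * ((2 * j + 1) * (2 * j)) := by
      rw [hcomb]
      calc a * ((2 * k - (2 * j - 1)) * (2 * k - 2 * j))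
          < a * (k ^ 2 * ((2 * j + 1) * (2 * j))) := by
            exact mul_lt_mul_of_pos_left hkey hapos
      _ = (a * k ^ 2) * ((2 * j + 1) * (2 * j)) := by ring
    exact Nat.lt_of_mul_lt_mul_right this
  -- move to ℝ
  have hk0 : (0 : ℝ) < (k : ℝ) := by positivity
  have hp1 : (0 : ℝ) < (k : ℝ) ^ (2 * j - 1) := by positivity
  have hp2 : (0 : ℝ) < (k : ℝ) ^ (2 * j + 1) := by positivity
  rw [gt_iff_lt, sub_pos, div_lt_div_iff₀ hp2 hp1]
  have hexp : 2 * j + 1 = (2 * j - 1) + 2 := by omega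
  rw [hexp, pow_add]
  have hcast : (b : ℝ) < (a : ℝ) * (k : ℝ) ^ 2 := by
    have := hlt
    exact_mod_cast this
  calc (b : ℝ) * (k : ℝ) ^ (2 * j - 1)
      < ((a : ℝ) * (k : ℝ) ^ 2) * (k : ℝ) ^ (2 * j - 1) := by
        exact mul_lt_mul_of_pos_right hcast hp1
  _ = (a : ℝ) * ((k : ℝ) ^ (2 * j - 1) * (k : ℝ) ^ 2) := by ring
end

section
/- Let P be a complex polynomial and suppose P(z) = P(0) + zᵏ·Q(z) for all z ∈ ℂ, where k ≥ 1 is an integer and Q is a polynomial with Q(0) ≠ 0. If |P| attains a global minimum at 0, i.e. P(z)·conj(P(z)) − P(0)·conj(P(0)) ≥ 0 for all z ∈ ℂ, then Re[conj(P(0))·Q(0)·ζᵏ] ≥ 0 for every ζ ∈ ℂ. -/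
/-- If `P(z) = P(0) + zᵏ·Q(z)` with `k ≥ 1`, `Q(0) ≠ 0`, and `|P|` attains a global
minimum at `0` (i.e. `P(z)·conj(P(z)) − P(0)·conj(P(0)) ≥ 0` for all `z`), then
`Re[conj(P(0))·Q(0)·ζᵏ] ≥ 0` for every `ζ ∈ ℂ`. -/
theorem min_at_zero_re_nonneg (P Q : Polynomial ℂ) (k : ℕ) (hk : 1 ≤ k)
    (hPQ : ∀ z : ℂ, P.eval z = P.eval 0 + z ^ k * Q.eval z)
    (hQ0 : Q.eval (0 : ℂ) ≠ 0)
    (hmin : ∀ z : ℂ,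
      0 ≤ (P.eval z * (starRingEnd ℂ) (P.eval z)).re
            - (P.eval 0 * (starRingEnd ℂ) (P.eval 0)).re) :
    ∀ ζ : ℂ, 0 ≤ ((starRingEnd ℂ) (P.eval 0) * Q.eval 0 * ζ ^ k).re := by
  intro ζ
  set a : ℂ := P.eval 0 with ha
  set g : ℝ → ℝ := fun t =>
    2 * ((starRingEnd ℂ) a * (ζ ^ k * Q.eval ((t : ℂ) * ζ))).re
      + t ^ k * Complex.normSq (ζ ^ k * Q.eval ((t : ℂ) * ζ)) with hg
  have hQc : Continuous fun t : ℝ => Q.eval ((t : ℂ) * ζ) :=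
    Q.continuous.comp (Complex.continuous_ofReal.mul continuous_const)
  have hgc : Continuous g := by
    refine Continuous.add ?_ ?_
    · exact continuous_const.mul (Complex.continuous_re.comp (continuous_const.mul
        (continuous_const.mul hQc)))
    · exact (continuous_pow k).mul
        (Complex.continuous_normSq.comp (continuous_const.mul hQc))
  have hlim : Filter.Tendsto g (nhdsWithin 0 (Set.Ioi 0)) (nhds (g 0)) :=
    (hgc.tendsto 0).mono_left nhdsWithin_le_nhds
  have hge : ∀ᶠ t in nhdsWithin (0 : ℝ) (Set.Ioi 0), 0 ≤ g t := by
    filter_upwards [self_mem_nhdsWithin] with t ht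
    have ht' : (0 : ℝ) < t := ht
    have h1 := hmin ((t : ℂ) * ζ)
    rw [hPQ ((t : ℂ) * ζ)] at h1
    set u : ℂ := ζ ^ k * Q.eval ((t : ℂ) * ζ) with hu
    have hx : ((t : ℂ) * ζ) ^ k * Q.eval ((t : ℂ) * ζ) = ((t ^ k : ℝ) : ℂ) * u := by
      rw [hu, mul_pow]; push_cast; ring
    rw [hx] at h1
    have hgt : g t = 2 * ((starRingEnd ℂ) a * u).re + t ^ k * Complex.normSq u := rfl
    clear_value u
    have heq : ((a + ((t ^ k : ℝ) : ℂ) * u) * (starRingEnd ℂ) (a + ((t ^ k : ℝ) : ℂ) * u)).re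
        - (a * (starRingEnd ℂ) a).re
        = t ^ k * (2 * ((starRingEnd ℂ) a * u).re + t ^ k * Complex.normSq u) := by
      simp only [map_add, map_mul, Complex.mul_re, Complex.add_re, Complex.add_im,
        Complex.mul_im, Complex.conj_re, Complex.conj_im, Complex.ofReal_re,
        Complex.ofReal_im, Complex.normSq_apply, Complex.conj_ofReal]
      ring
    rw [heq, ← hgt] at h1
    have htk : 0 < t ^ k := pow_pos ht' k
    nlinarith [h1, htk]
  have h0 : 0 ≤ g 0 := ge_of_tendsto hlim hge
  have hg0 : g 0 = 2 * ((starRingEnd ℂ) a * (ζ ^ k * Q.eval 0)).re := by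
    simp [hg, zero_pow (Nat.one_le_iff_ne_zero.mp hk)]
  rw [hg0] at h0
  have : (starRingEnd ℂ) a * Q.eval 0 * ζ ^ k = (starRingEnd ℂ) a * (ζ ^ k * Q.eval 0) := by
    ring
  rw [this]
  linarith
end
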